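/- Let G be a graph with vertex set {v_1,...,v_n} and let G' be the planar-preserving gadget graph built as follows: V(G') = V' ∪ V'' ∪ X_e, where V' = {v'_i}, V'' = {v''_i} with v'_i adjacent to v''_i (v''_i has degree 1), v'_i adjacent to v'_j iff v_i v_j ∈ E(G), and for each edge v_i v_j ∈ E(G) with i < j a path e¹_{ij} e²_{ij} e³_{ij} e⁴_{ij}, with v'_i adjacent to e¹_{ij} and e⁴_{ij}, and v'_j adjacent to e²_{ij} and e³_{ij}. Then G has an independent set of size k if and only if G' has a pair of perfectly matched sets of size k + 2·|E(G)|. -/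

import Mathlib

/-- `(A, B)` is a pair of perfectly matched sets in `G`. -/
def IsPMS {V : Type*} (G : SimpleGraph V) (A B : Finset V) : Prop :=
  Disjoint A B ∧ (∀ a ∈ A, ∃! b, b ∈ B ∧ G.Adj a b) ∧ (∀ b ∈ B, ∃! a, a ∈ A ∧ G.Adj b a)

/-- Vertex set of the planar gadget graph `G'`: a copy `V'` of `V(G)` (first summand),
pendant copies `V''` (second summand), and for every edge `v_i v_j` with `i < j` a path on
four vertices `e¹_{ij}, e²_{ij}, e³_{ij}, e⁴_{ij}` (third summand). -/
abbrev GadgetVert {V : Type*} [LinearOrder V] (G : SimpleGraph V) :=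
  V ⊕ V ⊕ ({p : V × V // p.1 < p.2 ∧ G.Adj p.1 p.2} × Fin 4)

/-- The planar gadget graph `G'`: `v'_i ∼ v'_j` iff `v_i v_j ∈ E(G)`; `v''_i` is a pendant
neighbor of `v'_i`; for each edge `v_i v_j` with `i < j`, the four gadget vertices form a
path `e¹-e²-e³-e⁴` with `v'_i` adjacent to `e¹, e⁴` and `v'_j` adjacent to `e², e³`. -/
def gadgetGraph {V : Type*} [LinearOrder V] (G : SimpleGraph V) :
    SimpleGraph (GadgetVert G) :=
  SimpleGraph.fromRel (fun x y =>
    match x, y with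
    | Sum.inl i, Sum.inl j => G.Adj i j
    | Sum.inl i, Sum.inr (Sum.inl j) => i = j
    | Sum.inl i, Sum.inr (Sum.inr (e, k)) =>
        (i = e.val.1 ∧ (k = 0 ∨ k = 3)) ∨ (i = e.val.2 ∧ (k = 1 ∨ k = 2))
    | Sum.inr (Sum.inr (e, k)), Sum.inr (Sum.inr (e', k')) =>
        e = e' ∧ (k' : ℕ) = (k : ℕ) + 1
    | _, _ => False)

/-!
From an independent set `I`, match each copy `v'_i` (`i ∈ I`) with its pendant `v''_i`, and in
the path of every edge match two pairs of consecutive path vertices, putting on the `B` side the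
two path vertices attached to an endpoint outside `I`; this gives `|I| + 2|E|` matched pairs.

Conversely, charge every matched pair of a pair of perfectly matched sets `(A, B)` to the vertex
`v_i` whose copy `v'_i` it contains, or, if it lies inside the path of an edge `e`, to `e`. A vertex
receives at most one pair and an edge at most two. An edge whose two endpoints are both charged
receives none: their copies lie on the same side, and every path vertex is adjacent to one of
them. So `k + 2|E| ≤ |R| + 2(|E| - m)` for the set `R` of charged vertices spanning `m` edges,
and deleting one endpoint of each of these edges leaves an independent set of size at least `k`.
-/

open Finset

theorem card_filter_snd_mem {α β : Type*} [Fintype α] [Fintype β] [DecidableEq β]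
    (f : α → Finset β) : #(univ.filter fun x : α × β => x.2 ∈ f x.1) = ∑ a, #(f a) := by
  rw [card_filter, Fintype.sum_prod_type]
  simp

section CrossEdges

variable {W : Type*} {H : SimpleGraph W} {A B : Finset W}

namespace IsPMS

theorem symm (h : IsPMS H A B) : IsPMS H B A := ⟨h.1.symm, h.2.2, h.2.1⟩

theorem eq_of_adj_left (h : IsPMS H A B) {a b b' : W} (ha : a ∈ A) (hb : b ∈ B) (hb' : b' ∈ B)
    (hab : H.Adj a b) (hab' : H.Adj a b') : b = b' :=
  (h.2.1 a ha).unique ⟨hb, hab⟩ ⟨hb', hab'⟩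

theorem eq_of_adj_right (h : IsPMS H A B) {a a' b : W} (ha : a ∈ A) (ha' : a' ∈ A)
    (hb : b ∈ B) (hab : H.Adj a b) (hab' : H.Adj a' b) : a = a' :=
  h.symm.eq_of_adj_left hb ha ha' hab.symm hab'.symm

end IsPMS

variable [DecidableRel H.Adj]

variable (H A B) in
def crossEdges : Finset (W × W) := (A ×ˢ B).filter fun p => H.Adj p.1 p.2

@[simp]
theorem mk_mem_crossEdges {a b : W} :
    (a, b) ∈ crossEdges H A B ↔ a ∈ A ∧ b ∈ B ∧ H.Adj a b := by
  simp [crossEdges, and_assoc]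

theorem adj_of_mem_crossEdges {p : W × W} (hp : p ∈ crossEdges H A B) : H.Adj p.1 p.2 :=
  (mem_filter.1 hp).2

namespace IsPMS

theorem card_crossEdges (h : IsPMS H A B) : #(crossEdges H A B) = #A := by
  refine card_nbij Prod.fst (fun ⟨a, b⟩ hp => (mk_mem_crossEdges.1 hp).1) ?_ ?_
  · rintro ⟨a, b⟩ hp ⟨a', b'⟩ hp' (rfl : a = a')
    rw [mem_coe, mk_mem_crossEdges] at hp hp'
    rw [h.eq_of_adj_left hp.1 hp.2.1 hp'.2.1 hp.2.2 hp'.2.2]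
  · intro a ha
    obtain ⟨b, ⟨hb, hab⟩, -⟩ := h.2.1 a ha
    exact ⟨(a, b), mk_mem_crossEdges.2 ⟨ha, hb, hab⟩, rfl⟩

theorem eq_of_mem_crossEdges (h : IsPMS H A B) {p q : W × W} {x : W}
    (hp : p ∈ crossEdges H A B) (hq : q ∈ crossEdges H A B) (hxp : x = p.1 ∨ x = p.2)
    (hxq : x = q.1 ∨ x = q.2) : p = q := by
  obtain ⟨a, b⟩ := p
  obtain ⟨a', b'⟩ := q
  rw [mk_mem_crossEdges] at hp hq
  obtain ⟨ha, hb, hab⟩ := hp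
  obtain ⟨ha', hb', hab'⟩ := hq
  have hAB := disjoint_left.1 h.1
  rcases hxp with rfl | rfl <;> rcases hxq with rfl | rfl
  · rw [h.eq_of_adj_left ha hb hb' hab hab']
  · exact absurd hb' (hAB ha)
  · exact absurd hb (hAB ha')
  · rw [h.eq_of_adj_right ha ha' hb hab hab']

theorem two_mul_card_crossEdges_filter_le [DecidableEq W] (h : IsPMS H A B) (Y : Finset W) :
    2 * #((crossEdges H A B).filter fun p => p.1 ∈ Y ∧ p.2 ∈ Y) ≤ #Y := by
  set M := (crossEdges H A B).filter fun p => p.1 ∈ Y ∧ p.2 ∈ Y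
  have hM {p} (hp : p ∈ M) := mem_filter.1 hp
  have hfst : #(M.image Prod.fst) = #M := card_image_of_injOn fun p hp q hq hpq =>
    h.eq_of_mem_crossEdges (hM hp).1 (hM hq).1 (.inl rfl) (.inl hpq)
  have hsnd : #(M.image Prod.snd) = #M := card_image_of_injOn fun p hp q hq hpq =>
    h.eq_of_mem_crossEdges (hM hp).1 (hM hq).1 (.inr rfl) (.inr hpq)
  have hdisj : Disjoint (M.image Prod.fst) (M.image Prod.snd) :=
    h.1.mono (image_subset_iff.2 fun ⟨_, _⟩ hp => (mk_mem_crossEdges.1 (hM hp).1).1)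
      (image_subset_iff.2 fun ⟨_, _⟩ hp => (mk_mem_crossEdges.1 (hM hp).1).2.1)
  calc 2 * #M = #(M.image Prod.fst ∪ M.image Prod.snd) := by
        rw [card_union_of_disjoint hdisj, hfst, hsnd, two_mul]
    _ ≤ #Y := card_le_card <| union_subset (image_subset_iff.2 fun p hp => (hM hp).2.1)
        (image_subset_iff.2 fun p hp => (hM hp).2.2)

end IsPMS

end CrossEdges

section Gadget

variable {V : Type*} [LinearOrder V] {G : SimpleGraph V}

abbrev GadgetEdge (G : SimpleGraph V) := {p : V × V // p.1 < p.2 ∧ G.Adj p.1 p.2}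

/-- The endpoint of `e` whose copy is adjacent to the path vertex `e^{m+1}` (`Fin 4` counts the
path `e¹ e² e³ e⁴` from `0`). -/
def GadgetEdge.anchor (e : GadgetEdge G) (m : Fin 4) : V :=
  if m = 0 ∨ m = 3 then e.1.1 else e.1.2

theorem GadgetEdge.anchor_eq_or (e : GadgetEdge G) (m : Fin 4) :
    e.anchor m = e.1.1 ∨ e.anchor m = e.1.2 := by
  unfold anchor; split_ifs <;> simp

section Adjacency

variable {i j : V} {e e' : GadgetEdge G} {m m' : Fin 4}

@[simp]
theorem gadgetGraph_adj_inl_inl :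
    (gadgetGraph G).Adj (.inl i) (.inl j) ↔ G.Adj i j := by
  simp only [gadgetGraph, SimpleGraph.fromRel_adj, ne_eq, Sum.inl.injEq]
  exact ⟨fun h => h.2.elim id .symm, fun h => ⟨h.ne, .inl h⟩⟩

@[simp]
theorem gadgetGraph_adj_inl_inr_inr :
    (gadgetGraph G).Adj (.inl i) (.inr (.inr (e, m))) ↔ i = e.anchor m := by
  fin_cases m <;> simp [gadgetGraph, GadgetEdge.anchor]

@[simp]
theorem gadgetGraph_adj_inr_inl_left {x : GadgetVert G} :
    (gadgetGraph G).Adj (.inr (.inl i)) x ↔ x = .inl i := by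
  rcases x with j | j | ⟨e, m⟩ <;> simp [gadgetGraph, eq_comm]

@[simp]
theorem gadgetGraph_adj_inr_inl_right {x : GadgetVert G} :
    (gadgetGraph G).Adj x (.inr (.inl i)) ↔ x = .inl i := by
  rw [SimpleGraph.adj_comm, gadgetGraph_adj_inr_inl_left]

@[simp]
theorem gadgetGraph_adj_inr_inr_inl :
    (gadgetGraph G).Adj (.inr (.inr (e, m))) (.inl i) ↔ i = e.anchor m := by
  rw [SimpleGraph.adj_comm, gadgetGraph_adj_inl_inr_inr]

@[simp]
theorem gadgetGraph_adj_inr_inr_inr_inr :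
    (gadgetGraph G).Adj (.inr (.inr (e, m))) (.inr (.inr (e', m'))) ↔
      e = e' ∧ (SimpleGraph.pathGraph 4).Adj m m' := by
  rcases eq_or_ne e e' with rfl | he
  · simp only [gadgetGraph, SimpleGraph.fromRel_adj, SimpleGraph.pathGraph_adj]
    simp [Fin.ext_iff]
    omega
  · simp [gadgetGraph, he, he.symm]

end Adjacency

theorem card_gadgetEdge [Fintype V] [DecidableRel G.Adj] :
    Fintype.card (GadgetEdge G) = #G.edgeFinset := by
  rw [← card_univ]
  refine card_nbij (fun e => s(e.1.1, e.1.2)) (fun e _ => by simpa using e.2.2) ?_ ?_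
  · rintro ⟨⟨a, b⟩, hab, _⟩ - ⟨⟨c, d⟩, hcd, _⟩ - hxy
    rcases Sym2.eq_iff.1 hxy with ⟨rfl, rfl⟩ | ⟨rfl, rfl⟩
    · rfl
    · exact absurd hab hcd.asymm
  · intro s hs
    induction s using Sym2.ind with | _ a b =>
    rw [mem_coe, SimpleGraph.mem_edgeFinset, SimpleGraph.mem_edgeSet] at hs
    rcases hs.ne.lt_or_gt with h | h
    · exact ⟨⟨(a, b), h, hs⟩, mem_univ _, rfl⟩
    · exact ⟨⟨(b, a), h, hs.symm⟩, mem_univ _, Sym2.eq_swap⟩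

section Forward

variable (I : Finset V)

def gadgetHalves (e : GadgetEdge G) : Finset (Fin 4) × Finset (Fin 4) :=
  if e.1.2 ∈ I then ({1, 2}, {0, 3}) else ({0, 3}, {1, 2})

theorem isPMS_gadgetHalves (e : GadgetEdge G) :
    IsPMS (SimpleGraph.pathGraph 4) (gadgetHalves I e).1 (gadgetHalves I e).2 := by
  unfold gadgetHalves IsPMS ExistsUnique
  simp only [SimpleGraph.pathGraph_adj]
  split_ifs <;> decide

theorem card_gadgetHalves_fst (e : GadgetEdge G) : #(gadgetHalves I e).1 = 2 := by
  unfold gadgetHalves; split_ifs <;> rfl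

theorem card_gadgetHalves_snd (e : GadgetEdge G) : #(gadgetHalves I e).2 = 2 := by
  unfold gadgetHalves; split_ifs <;> rfl

theorem anchor_notMem_of_mem_gadgetHalves_snd (hI : ∀ u ∈ I, ∀ v ∈ I, ¬ G.Adj u v)
    {e : GadgetEdge G} {m : Fin 4} (hm : m ∈ (gadgetHalves I e).2) : e.anchor m ∉ I := by
  have hedge : e.1.1 ∈ I → e.1.2 ∉ I := fun h1 h2 => hI _ h1 _ h2 e.2.2
  unfold gadgetHalves at hm
  split_ifs at hm with he <;> fin_cases m <;> simp_all [GadgetEdge.anchor]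

variable [Fintype V] [DecidableRel G.Adj]

def pmsOfIndepSet : Finset (GadgetVert G) × Finset (GadgetVert G) :=
  (I.disjSum ((∅ : Finset V).disjSum (univ.filter fun x => x.2 ∈ (gadgetHalves I x.1).1)),
    (∅ : Finset V).disjSum (I.disjSum (univ.filter fun x => x.2 ∈ (gadgetHalves I x.1).2)))

theorem card_pmsOfIndepSet_fst : #(pmsOfIndepSet I (G := G)).1 = #I + 2 * #G.edgeFinset := by
  rw [pmsOfIndepSet, card_disjSum, card_disjSum, card_empty,
    card_filter_snd_mem fun e => (gadgetHalves I e).1]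
  simp [card_gadgetHalves_fst, card_gadgetEdge, mul_comm]

theorem card_pmsOfIndepSet_snd : #(pmsOfIndepSet I (G := G)).2 = #I + 2 * #G.edgeFinset := by
  rw [pmsOfIndepSet, card_disjSum, card_disjSum, card_empty,
    card_filter_snd_mem fun e => (gadgetHalves I e).2]
  simp [card_gadgetHalves_snd, card_gadgetEdge, mul_comm]

theorem isPMS_pmsOfIndepSet (hI : ∀ u ∈ I, ∀ v ∈ I, ¬ G.Adj u v) :
    IsPMS (gadgetGraph G) (pmsOfIndepSet I).1 (pmsOfIndepSet I).2 := by
  refine ⟨?_, ?_, ?_⟩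
  · rw [disjoint_left]
    rintro (i | i | ⟨e, m⟩) ha hb <;> simp [pmsOfIndepSet] at ha hb
    exact disjoint_left.1 (isPMS_gadgetHalves I e).1 ha hb
  · rintro (i | i | ⟨e, m⟩) ha <;> simp [pmsOfIndepSet] at ha
    · refine ⟨.inr (.inl i), by simp [pmsOfIndepSet, ha], ?_⟩
      rintro (j | j | ⟨e, m⟩) ⟨hb, hab⟩ <;> simp [pmsOfIndepSet] at hb hab ⊢
      · exact hab.symm
      · exact anchor_notMem_of_mem_gadgetHalves_snd I hI hb (hab ▸ ha)
    · obtain ⟨m', ⟨hm', hadj⟩, huniq⟩ := (isPMS_gadgetHalves I e).2.1 m ha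
      refine ⟨.inr (.inr (e, m')), by simp [pmsOfIndepSet, hm', hadj], ?_⟩
      rintro (j | j | ⟨e', m''⟩) ⟨hb, hab⟩ <;> simp [pmsOfIndepSet] at hb hab ⊢
      obtain ⟨rfl, hab⟩ := hab
      exact ⟨rfl, huniq m'' ⟨hb, hab⟩⟩
  · rintro (i | i | ⟨e, m⟩) hb <;> simp [pmsOfIndepSet] at hb
    · exact ⟨.inl i, by simp [pmsOfIndepSet, hb], fun a ⟨_, hab⟩ => by simpa using hab⟩
    · obtain ⟨m', ⟨hm', hadj⟩, huniq⟩ := (isPMS_gadgetHalves I e).2.2 m hb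
      refine ⟨.inr (.inr (e, m')), by simp [pmsOfIndepSet, hm', hadj], ?_⟩
      rintro (j | j | ⟨e', m''⟩) ⟨ha, hab⟩ <;> simp [pmsOfIndepSet] at ha hab ⊢
      · exact anchor_notMem_of_mem_gadgetHalves_snd I hI hb (hab ▸ ha)
      · obtain ⟨rfl, hab⟩ := hab
        exact ⟨rfl, huniq m'' ⟨ha, hab⟩⟩

end Forward

section EdgesWithin

variable [Fintype V] [DecidableRel G.Adj]

variable (G) in
def edgesWithin (R : Finset V) : Finset (GadgetEdge G) :=
  univ.filter fun e => e.1.1 ∈ R ∧ e.1.2 ∈ R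

theorem exists_indep_card_add_card_edgesWithin (R : Finset V) :
    ∃ J : Finset V, (∀ u ∈ J, ∀ v ∈ J, ¬ G.Adj u v) ∧
      #R ≤ #J + #(edgesWithin G R) := by
  refine ⟨R \ (edgesWithin G R).image (·.1.1), ?_, ?_⟩
  · intro u hu v hv huv
    rw [mem_sdiff] at hu hv
    rcases huv.ne.lt_or_gt with hlt | hlt
    · exact hu.2 <| mem_image.2
        ⟨⟨(u, v), hlt, huv⟩, by simp [edgesWithin, hu.1, hv.1], rfl⟩
    · exact hv.2 <| mem_image.2
        ⟨⟨(v, u), hlt, huv.symm⟩, by simp [edgesWithin, hu.1, hv.1], rfl⟩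
  · have := le_card_sdiff ((edgesWithin G R).image (·.1.1)) R
    have := card_image_le (s := edgesWithin G R) (f := (·.1.1))
    omega

end EdgesWithin

section Backward

/-- A matched pair is charged to `v_i` if it contains the copy `v'_i` (the one in `A` if it
contains two copies), and otherwise to the edge whose path contains it. -/
def crossCharge : GadgetVert G × GadgetVert G → V ⊕ GadgetEdge G
  | (.inl i, _) => .inl i
  | (.inr (.inl i), _) => .inl i
  | (.inr (.inr _), .inl i) => .inl i
  | (.inr (.inr (e, _)), .inr _) => .inr e

theorem inl_eq_or_of_crossCharge_eq_inl {p : GadgetVert G × GadgetVert G} {i : V}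
    (hp : (gadgetGraph G).Adj p.1 p.2) (hc : crossCharge p = .inl i) :
    .inl i = p.1 ∨ .inl i = p.2 := by
  rcases p with ⟨j | j | ⟨e, m⟩, j' | j' | ⟨e', m'⟩⟩ <;> simp_all [crossCharge]

theorem exists_eq_of_crossCharge_eq_inr {p : GadgetVert G × GadgetVert G} {e : GadgetEdge G}
    (hp : (gadgetGraph G).Adj p.1 p.2) (hc : crossCharge p = .inr e) :
    ∃ m m', p = (.inr (.inr (e, m)), .inr (.inr (e, m'))) := by
  rcases p with ⟨j | j | ⟨e, m⟩, j' | j' | ⟨e', m'⟩⟩ <;> simp_all [crossCharge]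

-- Instance search gives up on this nested sum at its default size limit.
instance instDecidableEqGadgetVert : DecidableEq (GadgetVert G) := instDecidableEqSum

def gadgetPath (e : GadgetEdge G) : Finset (GadgetVert G) :=
  univ.image fun m => .inr (.inr (e, m))

variable {A B : Finset (GadgetVert G)} [DecidableRel (gadgetGraph G).Adj]

variable (A B) in
def chargedVertices : Finset V := ((crossEdges (gadgetGraph G) A B).image crossCharge).toLeft

variable (A B) in
def chargedEdges : Finset (GadgetEdge G) :=
  ((crossEdges (gadgetGraph G) A B).image crossCharge).toRight

theorem mem_chargedVertices {i : V} :
    i ∈ chargedVertices A B ↔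
      ∃ p ∈ crossEdges (gadgetGraph G) A B, crossCharge p = .inl i := by
  simp [chargedVertices]

theorem mem_chargedEdges {e : GadgetEdge G} :
    e ∈ chargedEdges A B ↔
      ∃ p ∈ crossEdges (gadgetGraph G) A B, crossCharge p = .inr e := by
  simp [chargedEdges]

theorem inl_mem_or_inl_mem_of_mem_chargedVertices {i : V} (hi : i ∈ chargedVertices A B) :
    .inl i ∈ A ∨ .inl i ∈ B := by
  obtain ⟨⟨a, b⟩, hp, hc⟩ := mem_chargedVertices.1 hi
  rw [mk_mem_crossEdges] at hp
  rcases inl_eq_or_of_crossCharge_eq_inl hp.2.2 hc with rfl | rfl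
  exacts [.inl hp.1, .inr hp.2.1]

namespace IsPMS

theorem card_filter_crossCharge_eq_inl_le (h : IsPMS (gadgetGraph G) A B) (i : V) :
    #((crossEdges (gadgetGraph G) A B).filter (crossCharge · = .inl i)) ≤ 1 := by
  refine card_le_one.2 fun p hp q hq => ?_
  rw [mem_filter] at hp hq
  exact h.eq_of_mem_crossEdges hp.1 hq.1
    (inl_eq_or_of_crossCharge_eq_inl (adj_of_mem_crossEdges hp.1) hp.2)
    (inl_eq_or_of_crossCharge_eq_inl (adj_of_mem_crossEdges hq.1) hq.2)

theorem card_filter_crossCharge_eq_inr_le (h : IsPMS (gadgetGraph G) A B) (e : GadgetEdge G) :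
    #((crossEdges (gadgetGraph G) A B).filter (crossCharge · = .inr e)) ≤ 2 := by
  have hsub : (crossEdges (gadgetGraph G) A B).filter (crossCharge · = .inr e) ⊆
      (crossEdges (gadgetGraph G) A B).filter
        fun p => p.1 ∈ gadgetPath e ∧ p.2 ∈ gadgetPath e := by
    intro p hp
    rw [mem_filter] at hp ⊢
    obtain ⟨m, m', rfl⟩ := exists_eq_of_crossCharge_eq_inr (adj_of_mem_crossEdges hp.1) hp.2
    exact ⟨hp.1, by simp [gadgetPath], by simp [gadgetPath]⟩
  have hpath : #(gadgetPath e) ≤ 4 := card_image_le.trans (by simp)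
  have := h.two_mul_card_crossEdges_filter_le (gadgetPath e)
  have := card_le_card hsub
  omega

theorem card_le_card_chargedVertices_add (h : IsPMS (gadgetGraph G) A B) :
    #A ≤ #(chargedVertices A B) + 2 * #(chargedEdges A B) := by
  set M := crossEdges (gadgetGraph G) A B
  set C := M.image crossCharge
  calc #A = #M := h.card_crossEdges.symm
    _ = ∑ c ∈ C, #(M.filter (crossCharge · = c)) := card_eq_sum_card_image _ _
    _ = ∑ i ∈ C.toLeft, #(M.filter (crossCharge · = .inl i)) +
          ∑ e ∈ C.toRight, #(M.filter (crossCharge · = .inr e)) := by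
        conv_lhs => rw [← toLeft_disjSum_toRight (u := C)]
        exact sum_disjSum _ _ _
    _ ≤ ∑ _i ∈ C.toLeft, 1 + ∑ _e ∈ C.toRight, 2 :=
        add_le_add (sum_le_sum fun i _ => h.card_filter_crossCharge_eq_inl_le i)
          (sum_le_sum fun e _ => h.card_filter_crossCharge_eq_inr_le e)
    _ = #(chargedVertices A B) + 2 * #(chargedEdges A B) := by
        simp [chargedVertices, chargedEdges, C, M, mul_comm]

theorem not_inl_mem_and_inl_mem (h : IsPMS (gadgetGraph G) A B) {i j : V}
    (hj : j ∈ chargedVertices A B) (hij : G.Adj i j) : ¬(.inl i ∈ A ∧ .inl j ∈ B) := by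
  rintro ⟨hiA, hjB⟩
  obtain ⟨q, hq, hqc⟩ := mem_chargedVertices.1 hj
  have hpair : (.inl i, .inl j) ∈ crossEdges (gadgetGraph G) A B := by simp [hiA, hjB, hij]
  obtain rfl := h.eq_of_mem_crossEdges hq hpair
    (inl_eq_or_of_crossCharge_eq_inl (adj_of_mem_crossEdges hq) hqc) (.inr rfl)
  simp only [crossCharge, Sum.inl.injEq] at hqc
  exact hij.ne hqc

theorem inl_anchor_notMem (h : IsPMS (gadgetGraph G) A B) {e : GadgetEdge G} {m m' : Fin 4}
    (hp : (.inr (.inr (e, m)), .inr (.inr (e, m'))) ∈ crossEdges (gadgetGraph G) A B) :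
    .inl (e.anchor m) ∉ B ∧ .inl (e.anchor m') ∉ A := by
  rw [mk_mem_crossEdges] at hp
  constructor
  · intro hB
    simpa using h.eq_of_adj_left hp.1 hp.2.1 hB hp.2.2 (by simp)
  · intro hA
    simpa using h.eq_of_adj_right hp.1 hA hp.2.1 hp.2.2 (by simp)

variable [Fintype V] [DecidableRel G.Adj]

theorem disjoint_chargedEdges_edgesWithin (h : IsPMS (gadgetGraph G) A B) :
    Disjoint (chargedEdges A B) (edgesWithin G (chargedVertices A B)) := by
  refine disjoint_left.2 fun e he he' => ?_
  obtain ⟨hu, hw⟩ := (mem_filter.1 he').2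
  obtain ⟨p, hp, hpc⟩ := mem_chargedEdges.1 he
  obtain ⟨m, m', rfl⟩ := exists_eq_of_crossCharge_eq_inr (adj_of_mem_crossEdges hp) hpc
  obtain ⟨hm, hm'⟩ := h.inl_anchor_notMem hp
  have := inl_mem_or_inl_mem_of_mem_chargedVertices hu
  have := inl_mem_or_inl_mem_of_mem_chargedVertices hw
  have := h.not_inl_mem_and_inl_mem hw e.2.2
  have := h.not_inl_mem_and_inl_mem hu e.2.2.symm
  -- Both copies lie on one side, but the anchors of `m` and `m'` lie on opposite sides.
  rcases e.anchor_eq_or m with h1 | h1 <;> rcases e.anchor_eq_or m' with h2 | h2 <;>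
    rw [h1] at hm <;> rw [h2] at hm' <;> tauto

theorem exists_indep_of_gadgetGraph (h : IsPMS (gadgetGraph G) A B) :
    ∃ J : Finset V, (∀ u ∈ J, ∀ v ∈ J, ¬ G.Adj u v) ∧
      #A ≤ #J + 2 * #G.edgeFinset := by
  obtain ⟨J, hJ, hR⟩ := exists_indep_card_add_card_edgesWithin (G := G) (chargedVertices A B)
  have hE : #(chargedEdges A B) + #(edgesWithin G (chargedVertices A B)) ≤ #G.edgeFinset := by
    rw [← card_union_of_disjoint h.disjoint_chargedEdges_edgesWithin, ← card_gadgetEdge]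
    exact card_le_univ _
  have := h.card_le_card_chargedVertices_add
  exact ⟨J, hJ, by omega⟩

end IsPMS

end Backward

end Gadget

/-- `G` has an independent set of size `k` iff the gadget graph `G'` has a pair of
perfectly matched sets of size `k + 2·|E(G)|`. -/
theorem independentSet_iff_pms_gadget {V : Type*} [Fintype V] [LinearOrder V]
    (G : SimpleGraph V) [DecidableRel G.Adj] (k : ℕ) :
    (∃ I : Finset V, I.card = k ∧ ∀ u ∈ I, ∀ v ∈ I, ¬ G.Adj u v) ↔
    (∃ A B : Finset (GadgetVert G), IsPMS (gadgetGraph G) A B ∧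
      A.card = k + 2 * G.edgeFinset.card ∧ B.card = k + 2 * G.edgeFinset.card) := by
  classical
  constructor
  · rintro ⟨I, rfl, hI⟩
    exact ⟨_, _, isPMS_pmsOfIndepSet I hI, card_pmsOfIndepSet_fst I, card_pmsOfIndepSet_snd I⟩
  · rintro ⟨A, B, h, hA, -⟩
    obtain ⟨J, hJ, hcard⟩ := h.exists_indep_of_gadgetGraph
    obtain ⟨I, hIJ, hI⟩ := exists_subset_card_eq (show k ≤ #J by omega)
    exact ⟨I, hI, fun u hu v hv => hJ u (hIJ hu) v (hIJ hv)⟩
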